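/- Let G be a finite simple graph with at least one vertex. Then G admits a b-coloring with k colors if and only if there exists a valid partial b-coloring ((C_1,…,C_k), B) of G[V(G)] = G with k colors such that for every i ∈ {1,…,k}, C_i ≠ ∅ and C_i ∩ B ≠ ∅ (equivalently, every color class has V(G)-type (desc, b) with desc(V(G)) = contains and b = 1, noting that ~_{V(G)} has the single equivalence class V(G)). -/

import Mathlib

/-!
For `U = V(G)` no vertex has a neighbour outside `U`, so `~_U` has the single class `V(G)`
and validity of a nonempty colour class `C` says exactly that every vertex of `B` lies in `C`
or has a neighbour in `C`. Taking `B` to be a set of `b`-vertices, one per colour, makes a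
`b`-coloring a valid partial `b`-coloring; conversely, the vertex of `B` in `C_i` cannot lie in
any other (nonempty) class `C_j`, so validity of `C_j` gives it a neighbour there.
-/

open scoped Classical

namespace BCol

/-- The three possible descriptions of a color class on an equivalence class:
`none`, `contains`, or `demand`. -/
inductive Desc where
  | none
  | contains
  | demand
deriving DecidableEq

variable {V : Type*}

/-- The neighborhood of `v` outside of `U`, i.e. `N_G(v) \ U`. -/
def extN (G : SimpleGraph V) (U : Set V) (v : V) : Set V := G.neighborSet v \ U

/-- The `~_U`-equivalence class of `u`: the vertices of `U` with the same
neighborhood outside of `U` as `u`. -/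
def cls (G : SimpleGraph V) (U : Set V) (u : V) : Set V :=
  {v | v ∈ U ∧ extN G U v = extN G U u}

/-- The set of equivalence classes `U/~_U`. -/
def eqClasses (G : SimpleGraph V) (U : Set V) : Set (Set V) :=
  {Q | ∃ u ∈ U, Q = cls G U u}

/-- The equivalence classes of `~_U`, as a type. -/
abbrev Classes (G : SimpleGraph V) (U : Set V) := {Q // Q ∈ eqClasses G U}

/-- A `U`-type: a pair of a map `U/~_U → {none, contains, demand}` and a bit. -/
abbrev UType (G : SimpleGraph V) (U : Set V) := (Classes G U → Desc) × Bool

/-- The neighborhood of `v` in the induced subgraph `G[U]`. -/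
def indN (G : SimpleGraph V) (U : Set V) (v : V) : Set V := G.neighborSet v ∩ U

/-- `C` is an independent set of the induced subgraph `G[U]`. -/
def IndepIn (G : SimpleGraph V) (U C : Set V) : Prop :=
  C ⊆ U ∧ ∀ u ∈ C, ∀ v ∈ C, ¬ G.Adj u v

/-- The `desc`-component of the `U`-type of the color class `C` relative to the set `B`
of partial `b`-vertices. -/
noncomputable def descOf (G : SimpleGraph V) (U B C : Set V) (Q : Classes G U) : Desc :=
  if (Q.1 ∩ C).Nonempty then Desc.contains
  else if ∃ v ∈ B ∩ Q.1, indN G U v ∩ C = ∅ then Desc.demand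
  else Desc.none

/-- The `U`-type of the color class `C` relative to the set `B` of partial `b`-vertices. -/
noncomputable def typeOf (G : SimpleGraph V) (U B C : Set V) : UType G U :=
  (descOf G U B C, if (C ∩ B).Nonempty then true else false)

/-- `C` is valid relative to `B`: there is no class `Q ∈ U/~_U` intersecting `C` such
that some `v ∈ B ∩ Q` has closed neighborhood in `G[U]` disjoint from `C`. -/
def ValidClass (G : SimpleGraph V) (U B C : Set V) : Prop :=
  ¬ ∃ Q ∈ eqClasses G U, (Q ∩ C).Nonempty ∧
      ∃ v ∈ B ∩ Q, (insert v (indN G U v)) ∩ C = ∅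

/-- `Q_R Q_S ∈ E(H)`: every vertex of `Q_R` is adjacent to every vertex of `Q_S`. -/
def OpEdge (G : SimpleGraph V) (QR QS : Set V) : Prop :=
  ∀ u ∈ QR, ∀ v ∈ QS, G.Adj u v

/-- An `R`-type `ρ` and an `S`-type `σ` are compatible. -/
def CompatibleTypes (G : SimpleGraph V) (R S : Set V)
    (ρ : UType G R) (σ : UType G S) : Prop :=
  (¬ (ρ.2 = true ∧ σ.2 = true)) ∧
  (¬ ∃ (QR : Classes G R) (QS : Classes G S),
      OpEdge G QR.1 QS.1 ∧ ρ.1 QR = Desc.contains ∧ σ.1 QS = Desc.contains) ∧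
  (∀ Q : Classes G (R ∪ S),
    ((∃ QR : Classes G R, QR.1 ⊆ Q.1 ∧ ρ.1 QR = Desc.contains) ∨
     (∃ QS : Classes G S, QS.1 ⊆ Q.1 ∧ σ.1 QS = Desc.contains)) →
    ((∀ QR : Classes G R, QR.1 ⊆ Q.1 → ρ.1 QR = Desc.demand →
        ∃ QS : Classes G S, σ.1 QS = Desc.contains ∧ OpEdge G QR.1 QS.1) ∧
     (∀ QS : Classes G S, QS.1 ⊆ Q.1 → σ.1 QS = Desc.demand →
        ∃ QR : Classes G R, ρ.1 QR = Desc.contains ∧ OpEdge G QR.1 QS.1)))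

/-- The merge type of an `R`-type `ρ` and an `S`-type `σ`. -/
noncomputable def mergeType (G : SimpleGraph V) (R S : Set V)
    (ρ : UType G R) (σ : UType G S) : UType G (R ∪ S) :=
  (fun Q =>
    if (∃ QR : Classes G R, QR.1 ⊆ Q.1 ∧ ρ.1 QR = Desc.contains) ∨
       (∃ QS : Classes G S, QS.1 ⊆ Q.1 ∧ σ.1 QS = Desc.contains) then
      Desc.contains
    else if (∃ QR : Classes G R, QR.1 ⊆ Q.1 ∧ ρ.1 QR = Desc.demand ∧
              ∀ QS : Classes G S, OpEdge G QR.1 QS.1 → σ.1 QS ≠ Desc.contains) ∨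
            (∃ QS : Classes G S, QS.1 ⊆ Q.1 ∧ σ.1 QS = Desc.demand ∧
              ∀ QR : Classes G R, OpEdge G QR.1 QS.1 → ρ.1 QR ≠ Desc.contains) then
      Desc.demand
    else Desc.none,
   ρ.2 || σ.2)

/-- `((C_1, …, C_k), B)` is a partial `b`-coloring of `G[U]` with `k` colors:
the `C_i` partition `U` into independent sets of `G[U]`, `B ⊆ U`, and each color class
contains at most one vertex of `B`. -/
def IsPartialBColoring (G : SimpleGraph V) (U : Set V) {k : ℕ}
    (C : Fin k → Set V) (B : Set V) : Prop :=
  (⋃ i, C i) = U ∧ (Pairwise fun i j => Disjoint (C i) (C j)) ∧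
  (∀ i, IndepIn G U (C i)) ∧ B ⊆ U ∧ ∀ i, (C i ∩ B).Subsingleton

/-- A valid partial `b`-coloring of `G[U]`: every color class is valid relative to `B`. -/
def IsValidPartialBColoring (G : SimpleGraph V) (U : Set V) {k : ℕ}
    (C : Fin k → Set V) (B : Set V) : Prop :=
  IsPartialBColoring G U C B ∧ ∀ i, ValidClass G U B (C i)

/-- The `U`-signature of the partial `b`-coloring `(C, B)`: to each `U`-type `τ` it
assigns the number of color classes whose `U`-type relative to `B` is `τ`. -/
noncomputable def sigOf (G : SimpleGraph V) (U : Set V) {k : ℕ}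
    (C : Fin k → Set V) (B : Set V) : UType G U → ℕ :=
  fun τ => Nat.card {i : Fin k // typeOf G U B (C i) = τ}

/-- `σ` is a `U`-signature for `k` colors: the values of `σ` sum up to `k`. -/
def IsSignature (G : SimpleGraph V) (U : Set V) (k : ℕ) (σ : UType G U → ℕ) : Prop :=
  ∑ᶠ τ, σ τ = k

/-- A triple `(σT, σR, σS)` of signatures is compatible: there is an assignment `f` of
natural numbers to the edges of the merge skeleton (i.e. to the compatible pairs of an
`R`-type and an `S`-type) such that the sums of `f` over the edges incident to each
`R`-type `ρ`, to each `S`-type `σ`, and over the edges labeled by each merge type `τ`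
are `σR ρ`, `σS σ`, and `σT τ`, respectively. -/
def CompatibleSignatures (G : SimpleGraph V) (R S : Set V)
    (σT : UType G (R ∪ S) → ℕ) (σR : UType G R → ℕ) (σS : UType G S → ℕ) : Prop :=
  ∃ f : UType G R × UType G S → ℕ,
    (∀ p, ¬ CompatibleTypes G R S p.1 p.2 → f p = 0) ∧
    (∀ ρ, ∑ᶠ σ, f (ρ, σ) = σR ρ) ∧
    (∀ σ, ∑ᶠ ρ, f (ρ, σ) = σS σ) ∧
    (∀ τ, ∑ᶠ p ∈ {p : UType G R × UType G S | mergeType G R S p.1 p.2 = τ}, f p = σT τ)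

theorem cls_univ (G : SimpleGraph V) (u : V) : cls G Set.univ u = Set.univ := by
  ext v
  simp [cls, extN]

theorem insert_indN_univ_inter_eq_empty_iff (G : SimpleGraph V) (v : V) (C : Set V) :
    insert v (indN G Set.univ v) ∩ C = ∅ ↔ v ∉ C ∧ ∀ u ∈ C, ¬ G.Adj v u := by
  simp only [Set.eq_empty_iff_forall_notMem, Set.mem_inter_iff, Set.mem_insert_iff, indN,
    Set.inter_univ, SimpleGraph.mem_neighborSet]
  grind

theorem validClass_univ_iff (G : SimpleGraph V) (B C : Set V) :
    ValidClass G Set.univ B C ↔ ∀ v ∈ B, C.Nonempty → v ∈ C ∨ ∃ u ∈ C, G.Adj v u := by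
  simp only [ValidClass, insert_indN_univ_inter_eq_empty_iff, not_exists, not_and]
  constructor
  · intro hvalid v hvB ⟨x, hx⟩
    by_contra! hv
    exact hvalid Set.univ ⟨v, trivial, (cls_univ G v).symm⟩ ⟨x, trivial, hx⟩ v ⟨hvB, trivial⟩
      hv.1 hv.2
  · rintro h Q - ⟨x, -, hx⟩ v ⟨hvB, -⟩ hvC hnadj
    obtain hv | ⟨u, huC, hadj⟩ := h v hvB ⟨x, hx⟩
    exacts [hvC hv, hnadj u huC hadj]

theorem inter_range_eq_singleton {ι : Type*} {C : ι → Set V} {v : ι → V}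
    (hdisj : Pairwise fun i j => Disjoint (C i) (C j)) (hv : ∀ i, v i ∈ C i) (i : ι) :
    C i ∩ Set.range v = {v i} := by
  refine Set.eq_singleton_iff_unique_mem.2 ⟨⟨hv i, i, rfl⟩, ?_⟩
  rintro _ ⟨hji, j, rfl⟩
  by_contra hne
  exact Set.disjoint_left.1 (hdisj fun h => hne (by rw [h])) (hv j) hji

theorem bColoring_iff_validPartialBColoring_general {V : Type*} (G : SimpleGraph V) (k : ℕ) :
    (∃ C : Fin k → Set V,
        (⋃ i, C i) = Set.univ ∧
        (Pairwise fun i j => Disjoint (C i) (C j)) ∧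
        (∀ i, ∀ u ∈ C i, ∀ v ∈ C i, ¬ G.Adj u v) ∧
        (∀ i, ∃ v ∈ C i, ∀ j, j ≠ i → ∃ u ∈ C j, G.Adj v u)) ↔
    (∃ (C : Fin k → Set V) (B : Set V),
        IsValidPartialBColoring G Set.univ C B ∧
        ∀ i, (C i).Nonempty ∧ (C i ∩ B).Nonempty) := by
  constructor
  · rintro ⟨C, hcov, hdisj, hind, hb⟩
    choose v hv hvb using hb
    have hB := inter_range_eq_singleton hdisj hv
    refine ⟨C, Set.range v, ⟨⟨hcov, hdisj, fun i => ⟨Set.subset_univ _, hind i⟩,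
      Set.subset_univ _, fun i => hB i ▸ Set.subsingleton_singleton⟩, fun i => ?_⟩,
      fun i => ⟨⟨v i, hv i⟩, hB i ▸ Set.singleton_nonempty _⟩⟩
    rw [validClass_univ_iff]
    rintro _ ⟨j, rfl⟩ -
    by_cases hji : j = i
    · exact .inl (hji ▸ hv j)
    · exact .inr (hvb j i (Ne.symm hji))
  · rintro ⟨C, B, ⟨⟨hcov, hdisj, hind, -, -⟩, hvalid⟩, hne⟩
    choose v hvC hvB using fun i => (hne i).2
    refine ⟨C, hcov, hdisj, fun i => (hind i).2, fun i => ⟨v i, hvC i, fun j hji => ?_⟩⟩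
    obtain hv | hadj := (validClass_univ_iff G B (C j)).1 (hvalid j) (v i) (hvB i) (hne j).1
    · exact absurd hv (Set.disjoint_left.1 (hdisj (Ne.symm hji)) (hvC i))
    · exact hadj

/-- Root lemma. Let `G` be a finite simple graph with at least one vertex. Then `G`
admits a `b`-coloring with `k` colors if and only if there is a valid partial
`b`-coloring `((C_1, …, C_k), B)` of `G[V(G)] = G` with `k` colors such that every
color class is nonempty and contains a vertex of `B`. -/
theorem bColoring_iff_validPartialBColoring {V : Type*} [Fintype V] [DecidableEq V]
    [Nonempty V] (G : SimpleGraph V) (k : ℕ) :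
    (∃ C : Fin k → Set V,
        (⋃ i, C i) = Set.univ ∧
        (Pairwise fun i j => Disjoint (C i) (C j)) ∧
        (∀ i, ∀ u ∈ C i, ∀ v ∈ C i, ¬ G.Adj u v) ∧
        (∀ i, ∃ v ∈ C i, ∀ j, j ≠ i → ∃ u ∈ C j, G.Adj v u)) ↔
    (∃ (C : Fin k → Set V) (B : Set V),
        IsValidPartialBColoring G Set.univ C B ∧
        ∀ i, (C i).Nonempty ∧ (C i ∩ B).Nonempty) :=
  bColoring_iff_validPartialBColoring_general G k

end BCol
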